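/- Let X be an n × M real matrix with XᵀX invertible whose 0-th column is the all-ones vector (X e₀ = 𝟙), and for y : Fin n → ℝ define the OLS residual vector e(y) = y − X (XᵀX)⁻¹ Xᵀ y. Let K ≥ 2, r : Fin n → Fin K, l̃ : Fin K → ℝ, r̃ i = l̃ (r i), and d_k i = 1 if r i ≤ k else 0. Then e(r̃) = ∑_{k=0}^{K−2} (l̃ k − l̃ (k+1)) · e(d_k). -/

import Mathlib

/-!
The residual map `y ↦ e(y)` is linear and kills the column space of `X`, in particular the
constant vectors. Pointwise, `l̃ (r i)` is the telescoping sum of the consecutive label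
differences `l̃ k − l̃ (k+1)` over the thresholds `k ≥ r i`, plus the top label `l̃ (K−1)`;
applying `e` removes that constant term.
-/

open Matrix

/-- The OLS residual vector `e(y) = y − X (XᵀX)⁻¹ Xᵀ y`. -/
noncomputable def olsResid {n M : ℕ} (X : Matrix (Fin n) (Fin M) ℝ) (y : Fin n → ℝ) :
    Fin n → ℝ :=
  y - X *ᵥ ((Xᵀ * X)⁻¹ *ᵥ (Xᵀ *ᵥ y))

section OLS

variable {n M : ℕ} (X : Matrix (Fin n) (Fin M) ℝ)

theorem olsResid_eq_mulVec (y : Fin n → ℝ) :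
    olsResid X y = (1 - X * (Xᵀ * X)⁻¹ * Xᵀ) *ᵥ y := by
  rw [olsResid, sub_mulVec, one_mulVec, mulVec_mulVec, mulVec_mulVec]

noncomputable def olsResidLinearMap : (Fin n → ℝ) →ₗ[ℝ] Fin n → ℝ :=
  (1 - X * (Xᵀ * X)⁻¹ * Xᵀ).mulVecLin

theorem coe_olsResidLinearMap : ⇑(olsResidLinearMap X) = olsResid X :=
  funext fun y => (olsResid_eq_mulVec X y).symm

variable {X}

theorem olsResid_mulVec (hX : IsUnit (Xᵀ * X)) (v : Fin M → ℝ) : olsResid X (X *ᵥ v) = 0 := by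
  rw [olsResid, mulVec_mulVec v Xᵀ X, mulVec_mulVec v,
    nonsing_inv_mul _ ((isUnit_iff_isUnit_det _).mp hX), one_mulVec, sub_self]

end OLS

theorem Finset.sum_range_sub_mul_ite_le {R : Type*} [CommRing R] {N j : ℕ} (g : ℕ → R)
    (hj : j ≤ N) :
    ∑ m ∈ Finset.range N, (g m - g (m + 1)) * (if j ≤ m then 1 else 0) = g j - g N := by
  induction N with
  | zero => rw [Nat.le_zero.mp hj]; simp
  | succ N ih =>
    rcases hj.lt_or_eq with hj | rfl
    · rw [Finset.sum_range_succ, ih (Nat.lt_succ_iff.mp hj), if_pos (Nat.lt_succ_iff.mp hj)]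
      ring
    · rw [sub_self]
      exact Finset.sum_eq_zero fun m hm => by
        rw [if_neg (by simpa using Finset.mem_range.mp hm), mul_zero]

theorem Fin.sum_sub_succ_mul_ite_le {R : Type*} [CommRing R] {K : ℕ} (hK : 0 < K)
    (l : Fin K → R) (j : Fin K) :
    ∑ k : Fin (K - 1), (l (Fin.castLE (Nat.sub_le K 1) k) -
        l (Fin.cast (Nat.sub_add_cancel hK) k.succ)) * (if (j : ℕ) ≤ k then 1 else 0) =
      l j - l ⟨K - 1, Nat.sub_lt hK Nat.one_pos⟩ := by
  set g : ℕ → R := fun m => if h : m < K then l ⟨m, h⟩ else 0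
  have hg : ∀ j : Fin K, l j = g j := fun j => by simp [g]
  simp only [hg, Fin.val_castLE, Fin.val_cast, Fin.val_succ]
  rw [Fin.sum_univ_eq_sum_range (fun m => (g m - g (m + 1)) * (if (j : ℕ) ≤ m then 1 else 0)),
    Finset.sum_range_sub_mul_ite_le g (Nat.le_sub_one_of_lt j.isLt)]

/-- If the design matrix contains a constant regressor (its 0-th
column is the all-ones vector), the OLS residual vector of the transformed outcome
is the weighted sum of the residual vectors of the dichotomizations. -/
theorem stmt_7 (n M K : ℕ) [NeZero M] (hK : 2 ≤ K)
    (X : Matrix (Fin n) (Fin M) ℝ) (hX : IsUnit (Xᵀ * X))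
    (hcol : X *ᵥ Pi.single (0 : Fin M) 1 = fun _ => (1 : ℝ))
    (r : Fin n → Fin K) (l : Fin K → ℝ) :
    olsResid X (fun i => l (r i)) =
      ∑ k : Fin (K - 1),
        (l (Fin.castLE (by omega) k) - l (Fin.cast (by omega) k.succ)) •
          olsResid X (fun i => if (r i : ℕ) ≤ (k : ℕ) then (1 : ℝ) else 0) := by
  have hdecomp : (fun i => l (r i)) =
      ∑ k : Fin (K - 1), (l (Fin.castLE (by omega) k) - l (Fin.cast (by omega) k.succ)) •
          (fun i => if (r i : ℕ) ≤ (k : ℕ) then (1 : ℝ) else 0) +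
        l ⟨K - 1, by omega⟩ • (X *ᵥ Pi.single (0 : Fin M) 1) := by
    funext i
    simp only [hcol, Pi.add_apply, Finset.sum_apply, Pi.smul_apply, smul_eq_mul, mul_one,
      Fin.sum_sub_succ_mul_ite_le (by omega : 0 < K)]
    ring
  rw [hdecomp, ← coe_olsResidLinearMap, map_add, map_sum, coe_olsResidLinearMap,
    ← mulVec_smul, olsResid_mulVec hX, add_zero]
  simp only [← coe_olsResidLinearMap, map_smul]
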